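/- arXiv:1606.00099 — 2 statements merged into one kernel-verified Lean document; each statement's English description precedes it below -/
import Mathlib

section
/- Let k ≥ 1 be a fixed positive integer and let ε = exp(2πi/k). If g is analytic on U with g(0)=0, g'(0)=1 and g is starlike of order (k-1)/k, and g_k(z) = ∏_{v=0}^{k-1} ε^{-v} g(ε^v z), then the function G_k(z) = g_k(z)/z^{k-1} (extended analytically at 0 with G_k(0)=0, G_k'(0)=1) is starlike on U, i.e. Re(z G_k'(z)/G_k(z)) > 0 for all nonzero z ∈ U. -/
open Complex MeasureTheory

noncomputable section

def unitDisk : Set ℂ := Metric.ball 0 1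

def Normalized (f : ℂ → ℂ) : Prop := f 0 = 0 ∧ deriv f 0 = 1

def StarlikeOfOrder (a : ℝ) (g : ℂ → ℂ) : Prop :=
  ∀ z ∈ unitDisk, z ≠ 0 → a < (z * deriv g z / g z).re

def Starlike (g : ℂ → ℂ) : Prop := StarlikeOfOrder 0 g

def CloseToConvex (f : ℂ → ℂ) : Prop :=
  AnalyticOn ℂ f unitDisk ∧ Normalized f ∧
  ∃ g : ℂ → ℂ, AnalyticOn ℂ g unitDisk ∧ Normalized g ∧ Set.InjOn g unitDisk ∧
    Starlike g ∧ ∀ z ∈ unitDisk, z ≠ 0 → 0 < (z * deriv f z / g z).re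

def Subordinate (f g : ℂ → ℂ) : Prop :=
  ∃ w : ℂ → ℂ, AnalyticOn ℂ w unitDisk ∧ w 0 = 0 ∧
    (∀ z ∈ unitDisk, w z ∈ unitDisk) ∧ ∀ z ∈ unitDisk, f z = g (w z)

def eps (k : ℕ) : ℂ := Complex.exp (2 * Real.pi * Complex.I / k)

def gk (k : ℕ) (g : ℂ → ℂ) (z : ℂ) : ℂ :=
  ∏ v ∈ Finset.range k, (eps k) ^ (-(v : ℤ)) * g ((eps k) ^ v * z)

def Ks (k : ℕ) (l m : ℝ) (φ : ℂ → ℂ) (f : ℂ → ℂ) : Prop :=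
  ∃ g : ℂ → ℂ, AnalyticOn ℂ g unitDisk ∧ Normalized g ∧
    StarlikeOfOrder ((k - 1 : ℝ) / k) g ∧
    Subordinate (fun z => (z ^ k * deriv f z
      + z ^ (k + 1) * iteratedDeriv 2 f z * ((l : ℂ) - m + 2 * l * m)
      + (l : ℂ) * m * z ^ (k + 2) * iteratedDeriv 3 f z) / gk k g z) φ

open Filter Topology

/-!
For `z ≠ 0` put `w_v = εᵛ z`. Each factor `ε⁻ᵛ g(εᵛ z)` of `gₖ` contributes `w_v g'(w_v) / g(w_v)`
to `z G'(z) / G(z)` and the denominator `z^(k-1)` contributes `-(k - 1)`. Since `|ε| = 1`, all `w_v`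
lie in the disc, so each of the `k` terms has real part `> (k-1)/k` and the total exceeds `k - 1`.
-/

lemma norm_eps (k : ℕ) : ‖eps k‖ = 1 := by
  rw [eps, Complex.norm_exp]
  norm_num [Complex.div_re, Complex.mul_re]

lemma eps_ne_zero (k : ℕ) : eps k ≠ 0 := Complex.exp_ne_zero _

lemma mul_mem_unitDisk {ζ z : ℂ} (hζ : ‖ζ‖ = 1) (hz : z ∈ unitDisk) : ζ * z ∈ unitDisk := by
  simpa [unitDisk, hζ] using hz

lemma StarlikeOfOrder.lt_re_mul_logDeriv {a : ℝ} {g : ℂ → ℂ} (hg : StarlikeOfOrder a g)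
    {z : ℂ} (hz : z ∈ unitDisk) (hz0 : z ≠ 0) : a < (z * logDeriv g z).re := by
  simpa only [logDeriv_apply, mul_div_assoc] using hg z hz hz0

lemma StarlikeOfOrder.apply_ne_zero {a : ℝ} {g : ℂ → ℂ} (ha : 0 ≤ a) (hg : StarlikeOfOrder a g)
    {z : ℂ} (hz : z ∈ unitDisk) (hz0 : z ≠ 0) : g z ≠ 0 := by
  intro hgz
  have := hg z hz hz0
  rw [hgz, div_zero, zero_re] at this
  linarith

lemma mul_logDeriv_const_mul_comp_mul {g : ℂ → ℂ} {c ζ z : ℂ} (hc : c ≠ 0)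
    (hg : DifferentiableAt ℂ g (ζ * z)) :
    z * logDeriv (fun x => c * g (ζ * x)) z = ζ * z * logDeriv g (ζ * z) := by
  rw [logDeriv_const_mul z c hc, ← Function.comp_def g (ζ * ·),
    logDeriv_comp hg (differentiableAt_id.const_mul ζ), deriv_const_mul_field', deriv_id'']
  ring

lemma mul_logDeriv_div_pow {h : ℂ → ℂ} {z : ℂ} (m : ℕ) (hd : DifferentiableAt ℂ h z)
    (hh : h z ≠ 0) (hz : z ≠ 0) :
    z * logDeriv (fun x => h x / x ^ m) z = z * logDeriv h z - m := by
  rw [logDeriv_div (g := (· ^ m)) z hh (pow_ne_zero m hz) hd (differentiableAt_pow m),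
    logDeriv_pow]
  field_simp

section gk

variable (k : ℕ) {g : ℂ → ℂ} {z : ℂ}

lemma gk_ne_zero (h0 : ∀ v, g (eps k ^ v * z) ≠ 0) : gk k g z ≠ 0 :=
  Finset.prod_ne_zero_iff.2 fun v _ => mul_ne_zero (zpow_ne_zero _ (eps_ne_zero k)) (h0 v)

lemma differentiableAt_gk_factor (hd : ∀ v, DifferentiableAt ℂ g (eps k ^ v * z)) (v : ℕ) :
    DifferentiableAt ℂ (fun x => eps k ^ (-(v : ℤ)) * g (eps k ^ v * x)) z :=
  ((hd v).comp z (differentiableAt_id.const_mul _)).const_mul _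

lemma differentiableAt_gk (hd : ∀ v, DifferentiableAt ℂ g (eps k ^ v * z)) :
    DifferentiableAt ℂ (gk k g) z :=
  .fun_finsetProd fun v _ => differentiableAt_gk_factor k hd v

lemma mul_logDeriv_gk (hd : ∀ v, DifferentiableAt ℂ g (eps k ^ v * z))
    (h0 : ∀ v, g (eps k ^ v * z) ≠ 0) :
    z * logDeriv (gk k g) z =
      ∑ v ∈ Finset.range k, eps k ^ v * z * logDeriv g (eps k ^ v * z) := by
  have hc : ∀ v : ℕ, eps k ^ (-(v : ℤ)) ≠ 0 := fun v => zpow_ne_zero _ (eps_ne_zero k)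
  unfold gk
  rw [logDeriv_prod (f := fun (v : ℕ) x => eps k ^ (-(v : ℤ)) * g (eps k ^ v * x))
    (fun v _ => mul_ne_zero (hc v) (h0 v)) (fun v _ => differentiableAt_gk_factor k hd v),
    Finset.mul_sum]
  exact Finset.sum_congr rfl fun v _ => mul_logDeriv_const_mul_comp_mul (hc v) (hd v)

lemma mul_deriv_div_of_eq_gk_div_pow {G : ℂ → ℂ}
    (hGk : ∀ z ∈ unitDisk, z ≠ 0 → G z = gk k g z / z ^ (k - 1))
    (hz : z ∈ unitDisk) (hz0 : z ≠ 0)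
    (hd : ∀ v, DifferentiableAt ℂ g (eps k ^ v * z)) (h0 : ∀ v, g (eps k ^ v * z) ≠ 0) :
    z * deriv G z / G z =
      ∑ v ∈ Finset.range k, eps k ^ v * z * logDeriv g (eps k ^ v * z) - (k - 1 : ℕ) := by
  have hG : G =ᶠ[𝓝 z] fun x => gk k g x / x ^ (k - 1) :=
    eventuallyEq_of_mem ((Metric.isOpen_ball.sdiff isClosed_singleton).mem_nhds ⟨hz, hz0⟩)
      fun x hx => hGk x hx.1 hx.2
  rw [mul_div_assoc, ← logDeriv_apply, (logDeriv_congr_nhds hG).eq_of_nhds,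
    mul_logDeriv_div_pow _ (differentiableAt_gk k hd) (gk_ne_zero k h0) hz0,
    mul_logDeriv_gk k hd h0]

end gk

theorem stmt1_general (k : ℕ) (hk : 1 ≤ k) (g : ℂ → ℂ) (hg : AnalyticOn ℂ g unitDisk)
    (hs : StarlikeOfOrder ((k - 1 : ℝ) / k) g)
    (G : ℂ → ℂ)
    (hGk : ∀ z ∈ unitDisk, z ≠ 0 → G z = gk k g z / z ^ (k - 1)) :
    Starlike G := by
  intro z hz hz0
  have hk0 : (0 : ℝ) < k := by exact_mod_cast hk
  have ha : (0 : ℝ) ≤ ((k : ℝ) - 1) / k :=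
    div_nonneg (sub_nonneg.2 (by exact_mod_cast hk)) hk0.le
  have hw : ∀ v, eps k ^ v * z ∈ unitDisk := fun v =>
    mul_mem_unitDisk (by rw [norm_pow, norm_eps, one_pow]) hz
  have hw0 : ∀ v, eps k ^ v * z ≠ 0 := fun v => mul_ne_zero (pow_ne_zero _ (eps_ne_zero k)) hz0
  have hd : ∀ v, DifferentiableAt ℂ g (eps k ^ v * z) := fun v =>
    hg.differentiableOn.differentiableAt (Metric.isOpen_ball.mem_nhds (hw v))
  have hsum : ∑ _v ∈ Finset.range k, ((k : ℝ) - 1) / k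
      < ∑ v ∈ Finset.range k, (eps k ^ v * z * logDeriv g (eps k ^ v * z)).re :=
    Finset.sum_lt_sum_of_nonempty (Finset.nonempty_range_iff.2 (by omega))
      fun v _ => hs.lt_re_mul_logDeriv (hw v) (hw0 v)
  rw [Finset.sum_const, Finset.card_range, nsmul_eq_mul, mul_div_cancel₀ _ hk0.ne'] at hsum
  rw [mul_deriv_div_of_eq_gk_div_pow k hGk hz hz0 hd fun v => hs.apply_ne_zero ha (hw v) (hw0 v),
    sub_re, re_sum, natCast_re, Nat.cast_sub hk, Nat.cast_one]
  linarith

theorem stmt1 (k : ℕ) (hk : 1 ≤ k) (g : ℂ → ℂ) (hg : AnalyticOn ℂ g unitDisk)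
    (hn : Normalized g) (hs : StarlikeOfOrder ((k - 1 : ℝ) / k) g)
    (G : ℂ → ℂ) (hG : AnalyticOn ℂ G unitDisk) (hG0 : G 0 = 0) (hG1 : deriv G 0 = 1)
    (hGk : ∀ z ∈ unitDisk, z ≠ 0 → G z = gk k g z / z ^ (k - 1)) :
    Starlike G :=
  stmt1_general k hk g hg hs G hGk
end
end

section
/- If g is normalized analytic on U and starlike with respect to symmetric points, i.e. Re(z g'(z)/(g(z) - g(-z))) > 0 for all nonzero z ∈ U, then the odd function h(z) = (g(z) - g(-z))/2 is starlike on U. -/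
/-!
Write `D(z) = g(z) - g(-z)` and `h = D / 2`. Since `h'(z) = (g'(z) + g'(-z)) / 2`,
`z h'(z) / h(z) = z g'(z) / D(z) + z g'(-z) / D(z)`, and the second summand is the
symmetric-point quotient of `g` evaluated at `-z`, because `D(-z) = -D(z)`.
Both summands thus have positive real part.
-/

open Complex MeasureTheory

noncomputable section

lemma neg_mem_unitDisk {z : ℂ} (hz : z ∈ unitDisk) : -z ∈ unitDisk := by
  simpa [unitDisk, Metric.mem_ball] using hz

lemma deriv_half_sub_comp_neg {𝕜 : Type*} [NontriviallyNormedField 𝕜] {g : 𝕜 → 𝕜} {z : 𝕜}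
    (hz : DifferentiableAt 𝕜 g z) (hnz : DifferentiableAt 𝕜 g (-z)) :
    deriv (fun w => (g w - g (-w)) / 2) z = (deriv g z + deriv g (-z)) / 2 := by
  have hcomp : HasDerivAt (fun w => g (-w)) (deriv g (-z) * (-1)) z :=
    hnz.hasDerivAt.comp z (hasDerivAt_neg z)
  refine (((hz.hasDerivAt.sub hcomp).div_const 2).congr_deriv ?_).deriv
  ring

lemma symmetricQuotient_neg {𝕜 : Type*} [NontriviallyNormedField 𝕜] (g : 𝕜 → 𝕜) (z : 𝕜) :
    -z * deriv g (-z) / (g (-z) - g (-(-z))) = z * deriv g (-z) / (g z - g (-z)) := by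
  rw [neg_neg, ← neg_sub, div_neg, neg_mul, neg_div, neg_neg]

theorem stmt14_general (g : ℂ → ℂ) (hg : AnalyticOn ℂ g unitDisk)
    (hs : ∀ z ∈ unitDisk, z ≠ 0 → 0 < (z * deriv g z / (g z - g (-z))).re) :
    Starlike (fun z => (g z - g (-z)) / 2) := by
  intro z hz hz0
  have hdiff : DifferentiableOn ℂ g unitDisk := hg.differentiableOn
  have hnz := neg_mem_unitDisk hz
  have hderiv := deriv_half_sub_comp_neg
    (hdiff.differentiableAt (Metric.isOpen_ball.mem_nhds hz))
    (hdiff.differentiableAt (Metric.isOpen_ball.mem_nhds hnz))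
  have hat_neg := hs (-z) hnz (neg_ne_zero.mpr hz0)
  rw [symmetricQuotient_neg] at hat_neg
  have hsplit : z * ((deriv g z + deriv g (-z)) / 2) / ((g z - g (-z)) / 2) =
      z * deriv g z / (g z - g (-z)) + z * deriv g (-z) / (g z - g (-z)) := by
    rw [mul_div_assoc', div_div_div_cancel_right₀ two_ne_zero, mul_add, add_div]
  rw [hderiv, hsplit, add_re]
  exact add_pos (hs z hz hz0) hat_neg

theorem stmt14 (g : ℂ → ℂ) (hg : AnalyticOn ℂ g unitDisk) (hn : Normalized g)
    (hs : ∀ z ∈ unitDisk, z ≠ 0 → 0 < (z * deriv g z / (g z - g (-z))).re) :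
    Starlike (fun z => (g z - g (-z)) / 2) :=
  stmt14_general g hg hs
end
end
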